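/- The D reduction relation on the set ℳ₀ of CF-normal morphism terms of ℳ is strongly normalizing and weakly Church–Rosser; consequently every term g of ℳ₀ has a unique D normal form D(g). -/
import Mathlib


open CategoryTheory

universe u v

namespace GDin

/-! ### Graphs in the sense of the paper -/

/-- Vertices of a graph with `m` left-hand argument places, `n` right-hand argument
places and `g` auxiliary `G`-vertices. -/
abbrev Vtx (m n g : ℕ) := (Fin m ⊕ Fin n) ⊕ Fin g

/-- The "same component" relation generated by a set of edges. -/
def Conn {V : Type*} (E : V → V → Prop) : V → V → Prop := Relation.EqvGen E

/-- A graph in the sense of the paper.  The sign (variance) functions `sL` (for the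
left-hand argument places `x₁,…,x_m`) and `sR` (for the right-hand argument places
`y₁,…,y_n`) are parameters; `true` means positive (covariant), `false` negative.
The structure also carries the number `k` of connected components together with the
component classifier `π`. -/
structure GGraph (m n g : ℕ) (sL : Fin m → Bool) (sR : Fin n → Bool) : Type where
  edge : Vtx m n g → Vtx m n g → Prop
  symm : ∀ u v, edge u v → edge v u
  /-- condition 1: every vertex belongs to some edge -/
  covered : ∀ v, ∃ w, edge v w
  /-- condition 2: an edge joins two left-hand argument places iff they have opposite
  signs and lie in the same component -/
  condX : ∀ i j : Fin m, edge (.inl (.inl i)) (.inl (.inl j)) ↔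
    (sL i = !sL j ∧ Conn edge (.inl (.inl i)) (.inl (.inl j)))
  /-- condition 3 -/
  condY : ∀ i j : Fin n, edge (.inl (.inr i)) (.inl (.inr j)) ↔
    (sR i = !sR j ∧ Conn edge (.inl (.inr i)) (.inl (.inr j)))
  /-- condition 4 -/
  condXY : ∀ (i : Fin m) (j : Fin n), edge (.inl (.inl i)) (.inl (.inr j)) ↔
    (sL i = sR j ∧ Conn edge (.inl (.inl i)) (.inl (.inr j)))
  /-- condition 5, first half: if a component contains an edge between two argument
  places then it contains no `G`-vertex -/
  condG₁ : ∀ v : Vtx m n g,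
    (∃ u w : Fin m ⊕ Fin n, Conn edge (.inl u) v ∧ edge (.inl u) (.inl w)) →
      ∀ a : Fin g, ¬ Conn edge (.inr a) v
  /-- condition 5, second half: otherwise the component contains exactly one
  `G`-vertex -/
  condG₂ : ∀ v : Vtx m n g,
    (¬ ∃ u w : Fin m ⊕ Fin n, Conn edge (.inl u) v ∧ edge (.inl u) (.inl w)) →
      ∃! a : Fin g, Conn edge (.inr a) v
  /-- condition 5: every other vertex of such a component is joined to the
  `G`-vertex by an edge -/
  condG₃ : ∀ (a : Fin g) (u : Fin m ⊕ Fin n),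
    Conn edge (.inl u) (.inr a) → edge (.inl u) (.inr a)
  /-- the number of components -/
  k : ℕ
  /-- the component classifier -/
  π : Vtx m n g → Fin k
  π_surj : Function.Surjective π
  π_eq : ∀ u v, π u = π v ↔ Conn edge u v

namespace GGraph

variable {m n g : ℕ} {sL : Fin m → Bool} {sR : Fin n → Bool}

/-- component of the `i`-th left-hand argument place -/
def πL (Γ : GGraph m n g sL sR) (i : Fin m) : Fin Γ.k := Γ.π (.inl (.inl i))

/-- component of the `j`-th right-hand argument place -/
def πR (Γ : GGraph m n g sL sR) (j : Fin n) : Fin Γ.k := Γ.π (.inl (.inr j))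

end GGraph

/-! ### Variance-indexed categories and g-dinaturality -/

/-- `B` or `Bᵒᵖ` according to a variance. -/
def VarCat (B : Type u) [Category.{v} B] : Bool → Type u
  | true => B
  | false => Bᵒᵖ

instance (B : Type u) [Category.{v} B] : ∀ b, Category.{v} (VarCat B b)
  | true => (inferInstance : Category B)
  | false => (inferInstance : Category Bᵒᵖ)

variable {B : Type u} [Category.{v} B]

/-- The object of `B` or `Bᵒᵖ` with `P` at a positive argument place and `N` at a
negative one. -/
def pairObj : (b : Bool) → B → B → VarCat B b
  | true, P, _ => P
  | false, _, N => Opposite.op N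

/-- The morphism with `u` at a positive argument place and `v` (contravariantly) at a
negative one. -/
def pairHom : (b : Bool) → {P P' N N' : B} → (P ⟶ P') → (N' ⟶ N) →
    (pairObj b P N ⟶ pairObj b P' N')
  | true, _, _, _, _, u, _ => u
  | false, _, _, _, _, _, v => v.op

variable {ι : Type} {k : ℕ}

/-- The tuple of objects `⟨u,v⟩` with `u` in all positive and `v` in all negative
argument places. -/
@[reducible] def tupObj (s : ι → Bool) (P N : B) : ∀ i, VarCat B (s i) :=
  fun i => pairObj (s i) P N

/-- The corresponding tuple of morphisms. -/
def tupHom (s : ι → Bool) {P P' N N' : B} (u : P ⟶ P') (v : N' ⟶ N) :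
    (tupObj s P N ⟶ tupObj s P' N') :=
  fun i => pairHom (s i) u v

/-- The diagonal-like tuple of objects determined by an assignment of objects to
the components of a graph. -/
@[reducible] def diagObj (s : ι → Bool) (pl : ι → Fin k) (A : Fin k → B) :
    ∀ i, VarCat B (s i) :=
  fun i => pairObj (s i) (A (pl i)) (A (pl i))

/-- The tuple of objects obtained from the component assignment `A` by replacing the
value of component `c` by `P` at positive and `N` at negative argument places. -/
def hexObj (s : ι → Bool) (pl : ι → Fin k) (c : Fin k) (A : Fin k → B) (P N : B) :
    ∀ i, VarCat B (s i) :=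
  fun i => if pl i = c then pairObj (s i) P N else pairObj (s i) (A (pl i)) (A (pl i))

/-- The corresponding tuple of morphisms (identities outside component `c`). -/
def hexHom (s : ι → Bool) (pl : ι → Fin k) (c : Fin k) (A : Fin k → B)
    {P P' N N' : B} (u : P ⟶ P') (v : N' ⟶ N) :
    (hexObj s pl c A P N ⟶ hexObj s pl c A P' N') :=
  fun i => by
    unfold hexObj
    by_cases h : pl i = c
    · simp only [if_pos h]; exact pairHom (s i) u v
    · simp only [if_neg h]; exact 𝟙 _

/-- update of a component assignment -/
def updF {γ : Type*} (A : Fin k → γ) (c : Fin k) (X : γ) : Fin k → γ :=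
  fun j => if j = c then X else A j

theorem diag_upd (s : ι → Bool) (pl : ι → Fin k) (c : Fin k) (A : Fin k → B) (X : B) :
    diagObj s pl (updF A c X) = hexObj s pl c A X X := by
  funext i
  unfold diagObj hexObj updF
  by_cases h : pl i = c <;> simp [h]

/-- g-dinaturality of a transformation with respect to a graph: in every component
and for every morphism `f : P ⟶ Q` (all other components being kept fixed), the
g-dinaturality hexagon commutes. -/
def IsGDin {m n gΓ : ℕ} {sL : Fin m → Bool} {sR : Fin n → Bool}
    (Γ : GGraph m n gΓ sL sR)
    (T : (∀ i : Fin m, VarCat B (sL i)) ⥤ B)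
    (S : (∀ j : Fin n, VarCat B (sR j)) ⥤ B)
    (α : ∀ A : Fin Γ.k → B, T.obj (diagObj sL Γ.πL A) ⟶ S.obj (diagObj sR Γ.πR A)) :
    Prop :=
  ∀ (c : Fin Γ.k) (A : Fin Γ.k → B) (P Q : B) (f : P ⟶ Q),
    T.map (hexHom sL Γ.πL c A f (𝟙 Q)) ≫
      eqToHom (congrArg T.obj (diag_upd sL Γ.πL c A Q).symm) ≫
      α (updF A c Q) ≫
      eqToHom (congrArg S.obj (diag_upd sR Γ.πR c A Q)) ≫
      S.map (hexHom sR Γ.πR c A (𝟙 Q) f)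
    = T.map (hexHom sL Γ.πL c A (𝟙 P) f) ≫
      eqToHom (congrArg T.obj (diag_upd sL Γ.πL c A P).symm) ≫
      α (updF A c P) ≫
      eqToHom (congrArg S.obj (diag_upd sR Γ.πR c A P)) ≫
      S.map (hexHom sR Γ.πR c A f (𝟙 P))

/-- The g-dinaturality hexagon for a transformation whose graph has a single
component (so that only the signs of the argument places matter). -/
def SingleHex {ιx ιz : Type} (sx : ιx → Bool) (sz : ιz → Bool)
    (F : (∀ i : ιx, VarCat B (sx i)) ⥤ B) (H : (∀ l : ιz, VarCat B (sz l)) ⥤ B)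
    (φ : ∀ A : B, F.obj (tupObj sx A A) ⟶ H.obj (tupObj sz A A)) : Prop :=
  ∀ (P Q : B) (f : P ⟶ Q),
    F.map (tupHom sx f (𝟙 Q)) ≫ φ Q ≫ H.map (tupHom sz (𝟙 Q) f)
    = F.map (tupHom sx (𝟙 P) f) ≫ φ P ≫ H.map (tupHom sz f (𝟙 P))


/-! ### The set `ℳ₀` of `CF`-normal terms of `ℳ`, and `D` reduction -/

/-- the possible arguments `1_A`, `1_C`, `f` of `T`, `S`, `R` in a term of `ℳ₀` -/
inductive MArg : Type
  | idA : MArg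
  | idC : MArg
  | ff : MArg
deriving DecidableEq

section MZsec
variable {m n p gΦ gΨ : ℕ} {sx : Fin m → Bool} {sy : Fin n → Bool} {sz : Fin p → Bool}

/-- A term of `ℳ₀`, i.e. a `CF`-normal form `[R(t⃗)] β(Y⃗) [S(h⃗)] α(X⃗) [T(g⃗)]` of a
term of `ℳ`, of type `T⟨A,C⟩ → R⟨C,A⟩`.  Such a term is completely determined by the
tuples `X⃗` and `Y⃗` of objects from `{A, C}` (here `true` codes `C` and `false`
codes `A`), subject to the typing (compatibility) condition below; the argument
vectors `g⃗`, `h⃗`, `t⃗` are then recovered by `MZ.g`, `MZ.h`, `MZ.t`. -/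
structure MZ (Φ : GGraph m n gΦ sx sy) (Ψ : GGraph n p gΨ sy sz) : Type where
  Xv : Fin Φ.k → Bool
  Yv : Fin Ψ.k → Bool
  compat : ∀ j : Fin n,
    (sy j = true → ¬(Xv (Φ.πR j) = true ∧ Yv (Ψ.πL j) = false)) ∧
    (sy j = false → ¬(Yv (Ψ.πL j) = true ∧ Xv (Φ.πR j) = false))

variable {Φ : GGraph m n gΦ sx sy} {Ψ : GGraph n p gΨ sy sz}

/-- the argument of `T` at the place `x_i` -/
def MZ.g (z : MZ Φ Ψ) (i : Fin m) : MArg :=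
  if sx i then (if z.Xv (Φ.πL i) then .ff else .idA)
  else (if z.Xv (Φ.πL i) then .idC else .ff)

/-- the argument of `S` at the place `y_j` -/
def MZ.h (z : MZ Φ Ψ) (j : Fin n) : MArg :=
  if sy j then
    (if z.Xv (Φ.πR j) then .idC else if z.Yv (Ψ.πL j) then .ff else .idA)
  else
    (if z.Yv (Ψ.πL j) then .idC else if z.Xv (Φ.πR j) then .ff else .idA)

/-- the argument of `R` at the place `z_l` -/
def MZ.t (z : MZ Φ Ψ) (l : Fin p) : MArg :=
  if sz l then (if z.Yv (Ψ.πR l) then .idC else .ff)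
  else (if z.Yv (Ψ.πR l) then .ff else .idA)

/-- the argument occupying a (left- or right-hand) argument place of `Φ` -/
def MZ.occPhi (z : MZ Φ Ψ) : Fin m ⊕ Fin n → MArg := Sum.elim z.g z.h

/-- the argument occupying a (left- or right-hand) argument place of `Ψ` -/
def MZ.occPsi (z : MZ Φ Ψ) : Fin n ⊕ Fin p → MArg := Sum.elim z.h z.t

/-- One step of `D` reduction on the set `ℳ₀`, applied to the entire term: an
`(α_i)`-step replaces the `i`-th argument `C` of `α` by `A`, provided all the
arguments `g_j` with `x_j ∈ Φ_i⁺` and all the arguments `h_j` with `y_j ∈ Φ_i⁻`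
are `f`; the affected arguments are updated accordingly (which, the terms of `ℳ₀`
being determined by `X⃗` and `Y⃗`, is captured by updating `X⃗`).  `(β_i)`-steps are
analogous. -/
inductive DStep : MZ Φ Ψ → MZ Φ Ψ → Prop
  | alphaStep (z z' : MZ Φ Ψ) (i : Fin Φ.k) :
      z.Xv i = true →
      (∀ j : Fin m, sx j = true → Φ.πL j = i → z.g j = .ff) →
      (∀ j : Fin n, sy j = false → Φ.πR j = i → z.h j = .ff) →
      z'.Xv = Function.update z.Xv i false →
      z'.Yv = z.Yv →
      DStep z z'
  | betaStep (z z' : MZ Φ Ψ) (i : Fin Ψ.k) :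
      z.Yv i = true →
      (∀ j : Fin n, sy j = true → Ψ.πL j = i → z.h j = .ff) →
      (∀ l : Fin p, sz l = false → Ψ.πR l = i → z.t l = .ff) →
      z'.Yv = Function.update z.Yv i false →
      z'.Xv = z.Xv →
      DStep z z'

/-- a term of `ℳ₀` is in `D` normal form -/
def DNormal (z : MZ Φ Ψ) : Prop := ¬ ∃ z', DStep z z'

end MZsec

section ProofAux

variable {m n p gΦ gΨ : ℕ} {sx : Fin m → Bool} {sy : Fin n → Bool} {sz : Fin p → Bool}
variable {Φ : GGraph m n gΦ sx sy} {Ψ : GGraph n p gΨ sy sz}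

lemma MZext {z w : MZ Φ Ψ} (hX : z.Xv = w.Xv) (hY : z.Yv = w.Yv) : z = w := by
  cases z; cases w; simp_all

lemma h_ff_of_true {z : MZ Φ Ψ} {j : Fin n} (hs : sy j = true) (hf : z.h j = .ff) :
    z.Xv (Φ.πR j) = false ∧ z.Yv (Ψ.πL j) = true := by
  cases h1 : z.Xv (Φ.πR j) <;> cases h2 : z.Yv (Ψ.πL j) <;>
    simp_all [MZ.h, hs, h1, h2]

lemma h_ff_of_false {z : MZ Φ Ψ} {j : Fin n} (hs : sy j = false) (hf : z.h j = .ff) :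
    z.Yv (Ψ.πL j) = false ∧ z.Xv (Φ.πR j) = true := by
  cases h1 : z.Xv (Φ.πR j) <;> cases h2 : z.Yv (Ψ.πL j) <;>
    simp_all [MZ.h, hs, h1, h2]

/-- The result of an `(α_i)`-step (only the `sy = false` part of the side condition
is needed to prove compatibility). -/
def updX (z : MZ Φ Ψ) (i : Fin Φ.k)
    (hh : ∀ j : Fin n, sy j = false → Φ.πR j = i → z.h j = .ff) : MZ Φ Ψ where
  Xv := Function.update z.Xv i false
  Yv := z.Yv
  compat := by
    intro j
    constructor
    · rintro hs ⟨h1, h2⟩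
      by_cases hpe : Φ.πR j = i
      · rw [hpe, Function.update_self] at h1; cases h1
      · rw [Function.update_of_ne hpe] at h1
        exact (z.compat j).1 hs ⟨h1, h2⟩
    · rintro hs ⟨h1, h2⟩
      by_cases hpe : Φ.πR j = i
      · have h3 := (h_ff_of_false hs (hh j hs hpe)).1
        rw [h3] at h1; cases h1
      · rw [Function.update_of_ne hpe] at h2
        exact (z.compat j).2 hs ⟨h1, h2⟩

/-- The result of a `(β_i)`-step. -/
def updY (z : MZ Φ Ψ) (i : Fin Ψ.k)
    (hh : ∀ j : Fin n, sy j = true → Ψ.πL j = i → z.h j = .ff) : MZ Φ Ψ where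
  Xv := z.Xv
  Yv := Function.update z.Yv i false
  compat := by
    intro j
    constructor
    · rintro hs ⟨h1, h2⟩
      by_cases hpe : Ψ.πL j = i
      · have h3 := (h_ff_of_true hs (hh j hs hpe)).1
        rw [h3] at h1; cases h1
      · rw [Function.update_of_ne hpe] at h2
        exact (z.compat j).1 hs ⟨h1, h2⟩
    · rintro hs ⟨h1, h2⟩
      by_cases hpe : Ψ.πL j = i
      · rw [hpe, Function.update_self] at h1; cases h1
      · rw [Function.update_of_ne hpe] at h1
        exact (z.compat j).2 hs ⟨h1, h2⟩

lemma updX_Xv (z : MZ Φ Ψ) (i : Fin Φ.k) (hh) :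
    (updX z i hh).Xv = Function.update z.Xv i false := rfl

lemma updX_Yv (z : MZ Φ Ψ) (i : Fin Φ.k) (hh) : (updX z i hh).Yv = z.Yv := rfl

lemma updY_Xv (z : MZ Φ Ψ) (i : Fin Ψ.k) (hh) : (updY z i hh).Xv = z.Xv := rfl

lemma updY_Yv (z : MZ Φ Ψ) (i : Fin Ψ.k) (hh) :
    (updY z i hh).Yv = Function.update z.Yv i false := rfl

lemma g_congr {z w : MZ Φ Ψ} (j : Fin m) (h : w.Xv (Φ.πL j) = z.Xv (Φ.πL j)) :
    w.g j = z.g j := by unfold MZ.g; rw [h]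

lemma h_congr {z w : MZ Φ Ψ} (j : Fin n) (hx : w.Xv (Φ.πR j) = z.Xv (Φ.πR j))
    (hy : w.Yv (Ψ.πL j) = z.Yv (Ψ.πL j)) : w.h j = z.h j := by
  unfold MZ.h; rw [hx, hy]

lemma t_congr {z w : MZ Φ Ψ} (l : Fin p) (h : w.Yv (Ψ.πR l) = z.Yv (Ψ.πR l)) :
    w.t l = z.t l := by unfold MZ.t; rw [h]

lemma updX_g_ne (z : MZ Φ Ψ) (i : Fin Φ.k) (hh) {j : Fin m} (hne : Φ.πL j ≠ i) :
    (updX z i hh).g j = z.g j :=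
  g_congr j (by rw [updX_Xv, Function.update_of_ne hne])

lemma updX_h_ne (z : MZ Φ Ψ) (i : Fin Φ.k) (hh) {j : Fin n} (hne : Φ.πR j ≠ i) :
    (updX z i hh).h j = z.h j :=
  h_congr j (by rw [updX_Xv, Function.update_of_ne hne]) rfl

lemma updX_t (z : MZ Φ Ψ) (i : Fin Φ.k) (hh) (l : Fin p) :
    (updX z i hh).t l = z.t l := t_congr l rfl

lemma updY_g (z : MZ Φ Ψ) (i : Fin Ψ.k) (hh) (j : Fin m) :
    (updY z i hh).g j = z.g j := g_congr j rfl

lemma updY_h_ne (z : MZ Φ Ψ) (i : Fin Ψ.k) (hh) {j : Fin n} (hne : Ψ.πL j ≠ i) :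
    (updY z i hh).h j = z.h j :=
  h_congr j rfl (by rw [updY_Yv, Function.update_of_ne hne])

lemma updY_t_ne (z : MZ Φ Ψ) (i : Fin Ψ.k) (hh) {l : Fin p} (hne : Ψ.πR l ≠ i) :
    (updY z i hh).t l = z.t l :=
  t_congr l (by rw [updY_Yv, Function.update_of_ne hne])

lemma updX_h_ff (z : MZ Φ Ψ) (i : Fin Φ.k) (hh) {j : Fin n}
    (hs : sy j = true) (hf : z.h j = .ff) : (updX z i hh).h j = .ff := by
  obtain ⟨h1, h2⟩ := h_ff_of_true hs hf
  have hx : (updX z i hh).Xv (Φ.πR j) = false := by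
    rw [updX_Xv, Function.update_apply, h1, ite_self]
  have hy : (updX z i hh).Yv (Ψ.πL j) = true := by rw [updX_Yv]; exact h2
  unfold MZ.h; rw [hs, hx, hy]; simp

lemma updY_h_ff (z : MZ Φ Ψ) (i : Fin Ψ.k) (hh) {j : Fin n}
    (hs : sy j = false) (hf : z.h j = .ff) : (updY z i hh).h j = .ff := by
  obtain ⟨h1, h2⟩ := h_ff_of_false hs hf
  have hy : (updY z i hh).Yv (Ψ.πL j) = false := by
    rw [updY_Yv, Function.update_apply, h1, ite_self]
  have hx : (updY z i hh).Xv (Φ.πR j) = true := by rw [updY_Xv]; exact h2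
  unfold MZ.h; rw [hs, hx, hy]; simp

/-- The measure: total number of `C`'s among the `X`'s and `Y`'s. -/
def μMZ (z : MZ Φ Ψ) : ℕ :=
  (Finset.univ.filter fun i => z.Xv i = true).card +
  (Finset.univ.filter fun i => z.Yv i = true).card

lemma card_update_lt {k : ℕ} (f : Fin k → Bool) (i : Fin k) (hi : f i = true) :
    (Finset.univ.filter fun j => Function.update f i false j = true).card <
      (Finset.univ.filter fun j => f j = true).card := by
  apply Finset.card_lt_card
  rw [Finset.ssubset_def]
  constructor
  · intro j hj
    simp only [Finset.mem_filter, Finset.mem_univ, true_and] at hj ⊢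
    by_cases hpe : j = i
    · rw [hpe, Function.update_self] at hj; cases hj
    · rwa [Function.update_of_ne hpe] at hj
  · intro hsub
    have := hsub (Finset.mem_filter.mpr ⟨Finset.mem_univ i, hi⟩)
    simp only [Finset.mem_filter, Finset.mem_univ, true_and,
      Function.update_self] at this
    cases this

lemma mu_decr {z z' : MZ Φ Ψ} (h : DStep z z') : μMZ z' < μMZ z := by
  cases h with
  | alphaStep i hX _ _ hX' hY' =>
    unfold μMZ
    rw [hX', hY']
    exact Nat.add_lt_add_right (card_update_lt z.Xv i hX) _
  | betaStep i hY _ _ hY' hX' =>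
    unfold μMZ
    rw [hX', hY']
    exact Nat.add_lt_add_left (card_update_lt z.Yv i hY) _

/-- The diamond property (in fact each divergence is resolved in at most one step
on each side). -/
lemma dstep_diamond (g a b : MZ Φ Ψ) (ha : DStep g a) (hb : DStep g b) :
    ∃ c, Relation.ReflGen DStep a c ∧ Relation.ReflGen DStep b c := by
  cases ha with
  | alphaStep i hXi hgi hhi haX haY =>
    cases hb with
    | alphaStep i' hXi' hgi' hhi' hbX hbY =>
      by_cases hii : i = i'
      · subst hii
        have hab : a = b := MZext (haX.trans hbX.symm) (haY.trans hbY.symm)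
        exact ⟨a, .refl, hab ▸ .refl⟩
      · have hii' : i' ≠ i := fun h => hii h.symm
        have ha_eq : a = updX g i hhi := MZext haX haY
        have hb_eq : b = updX g i' hhi' := MZext hbX hbY
        have hh_c : ∀ j : Fin n, sy j = false → Φ.πR j = i' →
            (updX g i hhi).h j = .ff := fun j hs hp =>
          (updX_h_ne g i hhi (hp ▸ hii')).trans (hhi' j hs hp)
        refine ⟨updX (updX g i hhi) i' hh_c, .single ?_, .single ?_⟩
        · refine DStep.alphaStep a _ i' ?_ ?_ ?_ ?_ ?_
          · rw [haX, Function.update_of_ne hii']; exact hXi'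
          · intro j hsj hpj
            rw [ha_eq, updX_g_ne g i hhi (hpj ▸ hii')]
            exact hgi' j hsj hpj
          · intro j hsj hpj
            rw [ha_eq]; exact hh_c j hsj hpj
          · rw [ha_eq]; rfl
          · rw [haY]; rfl
        · refine DStep.alphaStep b _ i ?_ ?_ ?_ ?_ ?_
          · rw [hbX, Function.update_of_ne hii]; exact hXi
          · intro j hsj hpj
            rw [hb_eq, updX_g_ne g i' hhi' (hpj ▸ hii)]
            exact hgi j hsj hpj
          · intro j hsj hpj
            rw [hb_eq, updX_h_ne g i' hhi' (hpj ▸ hii)]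
            exact hhi j hsj hpj
          · rw [hbX]
            exact Function.update_comm (β := fun _ => Bool) hii false false _
          · rw [hbY]; rfl
    | betaStep i' hYi' hhi' hti' hbY hbX =>
      have ha_eq : a = updX g i hhi := MZext haX haY
      have hb_eq : b = updY g i' hhi' := MZext hbX hbY
      have hh_c : ∀ j : Fin n, sy j = true → Ψ.πL j = i' →
          (updX g i hhi).h j = .ff := fun j hs hp =>
        updX_h_ff g i hhi hs (hhi' j hs hp)
      refine ⟨updY (updX g i hhi) i' hh_c, .single ?_, .single ?_⟩
      · refine DStep.betaStep a _ i' ?_ ?_ ?_ ?_ ?_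
        · rw [haY]; exact hYi'
        · intro j hsj hpj
          rw [ha_eq]; exact hh_c j hsj hpj
        · intro l hsl hpl
          rw [ha_eq, updX_t]; exact hti' l hsl hpl
        · rw [haY]; rfl
        · rw [haX]; rfl
      · refine DStep.alphaStep b _ i ?_ ?_ ?_ ?_ ?_
        · rw [hbX]; exact hXi
        · intro j hsj hpj
          rw [hb_eq, updY_g]; exact hgi j hsj hpj
        · intro j hsj hpj
          rw [hb_eq, updY_h_ff g i' hhi' hsj (hhi j hsj hpj)]
        · rw [hbX]; rfl
        · rw [hbY]; rfl
  | betaStep i hYi hhi hti haY haX =>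
    cases hb with
    | alphaStep i' hXi' hgi' hhi' hbX hbY =>
      have ha_eq : a = updY g i hhi := MZext haX haY
      have hb_eq : b = updX g i' hhi' := MZext hbX hbY
      have hh_c : ∀ j : Fin n, sy j = true → Ψ.πL j = i →
          (updX g i' hhi').h j = .ff := fun j hs hp =>
        updX_h_ff g i' hhi' hs (hhi j hs hp)
      refine ⟨updY (updX g i' hhi') i hh_c, .single ?_, .single ?_⟩
      · refine DStep.alphaStep a _ i' ?_ ?_ ?_ ?_ ?_
        · rw [haX]; exact hXi'
        · intro j hsj hpj
          rw [ha_eq, updY_g]; exact hgi' j hsj hpj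
        · intro j hsj hpj
          rw [ha_eq, updY_h_ff g i hhi hsj (hhi' j hsj hpj)]
        · rw [haX]; rfl
        · rw [haY]; rfl
      · refine DStep.betaStep b _ i ?_ ?_ ?_ ?_ ?_
        · rw [hbY]; exact hYi
        · intro j hsj hpj
          rw [hb_eq]; exact hh_c j hsj hpj
        · intro l hsl hpl
          rw [hb_eq, updX_t]; exact hti l hsl hpl
        · rw [hbY]; rfl
        · rw [hbX]; rfl
    | betaStep i' hYi' hhi' hti' hbY hbX =>
      by_cases hii : i = i'
      · subst hii
        have hab : a = b := MZext (haX.trans hbX.symm) (haY.trans hbY.symm)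
        exact ⟨a, .refl, hab ▸ .refl⟩
      · have hii' : i' ≠ i := fun h => hii h.symm
        have ha_eq : a = updY g i hhi := MZext haX haY
        have hb_eq : b = updY g i' hhi' := MZext hbX hbY
        have hh_c : ∀ j : Fin n, sy j = true → Ψ.πL j = i' →
            (updY g i hhi).h j = .ff := fun j hs hp =>
          (updY_h_ne g i hhi (hp ▸ hii')).trans (hhi' j hs hp)
        refine ⟨updY (updY g i hhi) i' hh_c, .single ?_, .single ?_⟩
        · refine DStep.betaStep a _ i' ?_ ?_ ?_ ?_ ?_
          · rw [haY, Function.update_of_ne hii']; exact hYi'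
          · intro j hsj hpj
            rw [ha_eq]; exact hh_c j hsj hpj
          · intro l hsl hpl
            rw [ha_eq, updY_t_ne g i hhi (hpl ▸ hii')]
            exact hti' l hsl hpl
          · rw [ha_eq]; rfl
          · rw [haX]; rfl
        · refine DStep.betaStep b _ i ?_ ?_ ?_ ?_ ?_
          · rw [hbY, Function.update_of_ne hii]; exact hYi
          · intro j hsj hpj
            rw [hb_eq, updY_h_ne g i' hhi' (hpj ▸ hii)]
            exact hhi j hsj hpj
          · intro l hsl hpl
            rw [hb_eq, updY_t_ne g i' hhi' (hpl ▸ hii)]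
            exact hti l hsl hpl
          · rw [hbY]
            exact Function.update_comm (β := fun _ => Bool) hii false false _
          · rw [hbX]; rfl

lemma normal_eq {z w : MZ Φ Ψ} (hz : DNormal z)
    (h : Relation.ReflTransGen DStep z w) : z = w := by
  rcases h.cases_head with h | ⟨c, hc, _⟩
  · exact h
  · exact absurd ⟨c, hc⟩ hz

lemma exists_nf_aux : ∀ (N : ℕ) (g : MZ Φ Ψ), μMZ g ≤ N →
    ∃ nf, Relation.ReflTransGen DStep g nf ∧ DNormal nf := by
  intro N
  induction N with
  | zero =>
    intro g hg
    by_cases hn : DNormal g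
    · exact ⟨g, .refl, hn⟩
    · simp only [DNormal, not_not] at hn
      obtain ⟨g', hstep⟩ := hn
      exact absurd (mu_decr hstep) (by omega)
  | succ N ih =>
    intro g hg
    by_cases hn : DNormal g
    · exact ⟨g, .refl, hn⟩
    · simp only [DNormal, not_not] at hn
      obtain ⟨g', hstep⟩ := hn
      obtain ⟨nf, h1, h2⟩ := ih g' (by have := mu_decr hstep; omega)
      exact ⟨nf, .head hstep h1, h2⟩

end ProofAux

/-- Lemma 2.6 of the paper.  The `D` reduction relation on the set
`ℳ₀` of `CF`-normal morphism terms of `ℳ` is strongly normalizing and weakly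
Church–Rosser; consequently every term `g` of `ℳ₀` has a unique `D` normal form
`D(g)`. -/
theorem D_SN_WCR_uniqueNF
    {m n p gΦ gΨ : ℕ} {sx : Fin m → Bool} {sy : Fin n → Bool} {sz : Fin p → Bool}
    {Φ : GGraph m n gΦ sx sy} {Ψ : GGraph n p gΨ sy sz} :
    -- strong normalization
    (∀ seq : ℕ → MZ Φ Ψ, ¬ ∀ t, DStep (seq t) (seq (t + 1))) ∧
    -- weak Church–Rosser
    (∀ g a b : MZ Φ Ψ, DStep g a → DStep g b →
        ∃ c, Relation.ReflTransGen DStep a c ∧ Relation.ReflTransGen DStep b c) ∧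
    -- existence and uniqueness of normal forms
    (∀ g : MZ Φ Ψ, ∃ nf, Relation.ReflTransGen DStep g nf ∧ DNormal nf) ∧
    (∀ g nf₁ nf₂ : MZ Φ Ψ, Relation.ReflTransGen DStep g nf₁ →
        Relation.ReflTransGen DStep g nf₂ → DNormal nf₁ → DNormal nf₂ → nf₁ = nf₂) := by
  refine ⟨?_, ?_, ?_, ?_⟩
  · -- strong normalization
    intro seq hstep
    have hmono : ∀ t, μMZ (seq t) + t ≤ μMZ (seq 0) := by
      intro t
      induction t with
      | zero => simp
      | succ t ih =>
        have := mu_decr (hstep t)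
        omega
    have := hmono (μMZ (seq 0) + 1)
    omega
  · -- weak Church–Rosser
    intro g a b ha hb
    obtain ⟨c, hc1, hc2⟩ := dstep_diamond g a b ha hb
    exact ⟨c, hc1.to_reflTransGen, hc2.to_reflTransGen⟩
  · -- existence of normal forms
    intro g
    exact exists_nf_aux (μMZ g) g le_rfl
  · -- uniqueness of normal forms
    intro g nf₁ nf₂ h1 h2 hn1 hn2
    obtain ⟨d, hd1, hd2⟩ := Relation.church_rosser
      (fun a b c hab hac => by
        obtain ⟨e, he1, he2⟩ := dstep_diamond a b c hab hac
        exact ⟨e, he1, he2.to_reflTransGen⟩) h1 h2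
    rw [normal_eq hn1 hd1, normal_eq hn2 hd2]
end GDin
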